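/- arXiv:2301.06747 — 2 statements merged into one kernel-verified Lean document; each statement's English description precedes it below -/
import Mathlib

section
/- For the two-resonator generalized eigenvalue problem L^{-1/2} C^α L^{-1/2} b = λ b with L = diag(ℓ1, ℓ2), the matrix admits a double eigenvalue for some α ∈ (-π/L, π/L] if and only if ℓ1 = ℓ2, s1 = s2, and α = ±π/L. -/
/-!
For a Hermitian matrix `!![a, b; conj b, d]` one has `tr² - 4 det = (a - d)² + 4 |b|²`, so a
double eigenvalue forces `a = d` and `b = 0`. Here `a = d` says `ℓ1 = ℓ2`, while
`|1/s1 + e^{iθ}/s2|² = (1/s1 - 1/s2)² + 2 (1 + cos θ)/(s1 s2)` vanishes exactly when `s1 = s2` and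
`cos θ = -1`, which for `θ = αL ∈ (-π, π]` means `α = π/L`.
-/

open Matrix Complex ComplexConjugate Real

theorem Real.cos_eq_neg_one_iff_of_mem_Ioc {θ : ℝ} (hθ : θ ∈ Set.Ioc (-π) π) :
    Real.cos θ = -1 ↔ θ = π := by
  refine ⟨fun h => ?_, fun h => h ▸ Real.cos_pi⟩
  obtain ⟨k, rfl⟩ := Real.cos_eq_neg_one_iff.1 h
  have hk : k = 0 := by
    have hlo : (-1 : ℝ) < k := by nlinarith [hθ.1, pi_pos]
    have hhi : (k : ℝ) ≤ 0 := by nlinarith [hθ.2, pi_pos]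
    have : -1 < k ∧ k ≤ 0 := ⟨by exact_mod_cast hlo, by exact_mod_cast hhi⟩
    omega
  simp [hk]

theorem Matrix.trace_sq_sub_four_det_fin_two {R : Type*} [CommRing R] (a b c d : R) :
    (!![a, b; c, d]).trace ^ 2 - 4 * (!![a, b; c, d]).det = (a - d) ^ 2 + 4 * (b * c) := by
  rw [trace_fin_two_of, det_fin_two_of]; ring

theorem Matrix.trace_sq_eq_four_mul_det_iff_fin_two_hermitian (a d : ℝ) (b : ℂ) :
    (!![(a : ℂ), b; conj b, (d : ℂ)]).trace ^ 2 = 4 * (!![(a : ℂ), b; conj b, (d : ℂ)]).det ↔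
      a = d ∧ b = 0 := by
  have hdisc : (!![(a : ℂ), b; conj b, (d : ℂ)]).trace ^ 2 -
      4 * (!![(a : ℂ), b; conj b, (d : ℂ)]).det = (((a - d) ^ 2 + 4 * normSq b : ℝ) : ℂ) := by
    rw [trace_sq_sub_four_det_fin_two, mul_conj]; push_cast; ring
  rw [← sub_eq_zero, hdisc, ofReal_eq_zero]
  have h1 := sq_nonneg (a - d)
  have h2 := normSq_nonneg b
  constructor
  · intro h
    exact ⟨by nlinarith, normSq_eq_zero.1 (by linarith)⟩
  · rintro ⟨rfl, rfl⟩
    simp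

theorem Complex.normSq_ofReal_add_ofReal_mul_exp (x y θ : ℝ) :
    normSq (x + y * exp (θ * I)) = (x - y) ^ 2 + 2 * x * y * (1 + Real.cos θ) := by
  rw [exp_mul_I, ← ofReal_cos, ← ofReal_sin, mul_add, ← mul_assoc, ← ofReal_mul, ← ofReal_mul,
    ← add_assoc, ← ofReal_add, normSq_add_mul_I]
  linear_combination y ^ 2 * Real.sin_sq_add_cos_sq θ

theorem Complex.ofReal_add_ofReal_mul_exp_eq_zero_iff {x y : ℝ} (hx : 0 < x) (hy : 0 < y) (θ : ℝ) :
    (x : ℂ) + y * exp (θ * I) = 0 ↔ x = y ∧ Real.cos θ = -1 := by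
  rw [← normSq_eq_zero, normSq_ofReal_add_ofReal_mul_exp]
  have h1 := sq_nonneg (x - y)
  have h2 : 0 ≤ 1 + Real.cos θ := by linarith [Real.neg_one_le_cos θ]
  have h3 : 0 < 2 * x * y := by positivity
  constructor
  · intro h
    have e1 : (x - y) ^ 2 = 0 := by nlinarith
    have e2 : 1 + Real.cos θ = 0 := by nlinarith
    exact ⟨by nlinarith, by linarith⟩
  · rintro ⟨rfl, h⟩
    simp [h]

theorem Complex.one_div_add_exp_div_eq_zero_iff {s1 s2 : ℝ} (hs1 : 0 < s1) (hs2 : 0 < s2) (θ : ℝ) :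
    1 / (s1 : ℂ) + exp (θ * I) / s2 = 0 ↔ s1 = s2 ∧ Real.cos θ = -1 := by
  have h := ofReal_add_ofReal_mul_exp_eq_zero_iff (inv_pos.2 hs1) (inv_pos.2 hs2) θ
  rw [_root_.inv_inj] at h
  convert h using 2
  push_cast
  ring

/-- the symmetrised two-resonator capacitance matrix `L^{-1/2} C^α L^{-1/2}`
admits a double eigenvalue (repeated root of the characteristic polynomial, i.e.
`trace² = 4·det`) for `α ∈ (-π/L, π/L]` if and only if `ℓ1 = ℓ2`, `s1 = s2` and
`α = ±π/L`. -/
theorem stmt2 (ℓ1 ℓ2 s1 s2 L : ℝ) (h1 : 0 < ℓ1) (h2 : 0 < ℓ2) (hs1 : 0 < s1)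
    (hs2 : 0 < s2) (hL : 0 < L) (α : ℝ) (hα : α ∈ Set.Ioc (-(Real.pi/L)) (Real.pi/L)) :
    let M : Matrix (Fin 2) (Fin 2) ℂ :=
      !![(((1/s1 + 1/s2)/ℓ1 : ℝ) : ℂ),
         (-1/(s1:ℂ) - Complex.exp (Complex.I*α*L)/(s2:ℂ)) / ((Real.sqrt ℓ1 * Real.sqrt ℓ2 : ℝ) : ℂ);
         (-1/(s1:ℂ) - Complex.exp (-(Complex.I*α*L))/(s2:ℂ)) / ((Real.sqrt ℓ1 * Real.sqrt ℓ2 : ℝ) : ℂ),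
         (((1/s1 + 1/s2)/ℓ2 : ℝ) : ℂ)]
    (M.trace ^ 2 = 4 * M.det) ↔ (ℓ1 = ℓ2 ∧ s1 = s2 ∧ (α = Real.pi/L ∨ α = -(Real.pi/L))) := by
  intro M
  set r : ℝ := Real.sqrt ℓ1 * Real.sqrt ℓ2
  have hr : (r : ℂ) ≠ 0 := ofReal_ne_zero.2 (by positivity)
  have hexp : I * α * L = (α * L : ℝ) * I := by push_cast; ring
  have hconj : conj ((-1 / (s1 : ℂ) - exp (I * α * L) / s2) / r) =
      (-1 / (s1 : ℂ) - exp (-(I * α * L)) / s2) / r := by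
    simp [map_div₀, ← exp_conj]
  have hdiag : (1 / s1 + 1 / s2) / ℓ1 = (1 / s1 + 1 / s2) / ℓ2 ↔ ℓ1 = ℓ2 := by
    rw [div_eq_div_iff h1.ne' h2.ne', mul_right_inj' (by positivity), eq_comm]
  have hoff : (-1 / (s1 : ℂ) - exp (I * α * L) / s2) / r = 0 ↔
      s1 = s2 ∧ Real.cos (α * L) = -1 := by
    rw [div_eq_zero_iff, or_iff_left hr, neg_div, ← neg_add', neg_eq_zero, hexp,
      one_div_add_exp_div_eq_zero_iff hs1 hs2]
  have hθ : α * L ∈ Set.Ioc (-π) π :=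
    ⟨(neg_div L π ▸ div_lt_iff₀ hL).1 hα.1, (le_div_iff₀ hL).1 hα.2⟩
  have hα' : α = π / L ∨ α = -(π / L) ↔ α * L = π := by
    rw [or_iff_left hα.1.ne', eq_div_iff hL.ne']
  simp only [M]
  rw [← hconj, trace_sq_eq_four_mul_det_iff_fin_two_hermitian, hdiag, hoff,
    cos_eq_neg_one_iff_of_mem_Ioc hθ, hα']
end

section
/- For α with e^{iαL} ≠ 1, the quasiperiodic capacitance matrix C^α is positive definite: x* C^α x = 0 implies x = 0. For e^{iαL} = 1, the kernel of C^α consists exactly of constant vectors. -/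
open Matrix

open Finset
open scoped ComplexConjugate

lemma sum_ite_nat {m : ℕ} (t : ℕ) (f : Fin m → ℂ) :
    ∑ j : Fin m, (if (j : ℕ) = t then f j else 0) =
      if h : t < m then f ⟨t, h⟩ else 0 := by
  split_ifs with h
  · rw [Finset.sum_eq_single (⟨t, h⟩ : Fin m)]
    · simp
    · intro j _ hj
      rw [if_neg]
      intro hc; exact hj (Fin.ext hc)
    · simp
  · apply Finset.sum_eq_zero
    intro j _
    rw [if_neg]
    have := j.isLt; omega

lemma sum_ite_nat' {m : ℕ} (t : ℕ) (f : Fin m → ℂ) :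
    ∑ j : Fin m, (if t = (j : ℕ) + 1 then f j else 0) =
      if h : t - 1 < m ∧ 1 ≤ t then f ⟨t - 1, h.1⟩ else 0 := by
  have : ∀ j : Fin m, (if t = (j : ℕ) + 1 then f j else 0)
      = if (j : ℕ) = t - 1 then (if 1 ≤ t then f j else 0) else 0 := by
    intro j
    by_cases h1 : t = (j : ℕ) + 1
    · rw [if_pos h1, if_pos (by omega), if_pos (by omega)]
    · rcases Nat.eq_or_lt_of_le (Nat.zero_le t) with h2 | h2
      · rw [if_neg h1]; split_ifs with h3 h4 <;> first | rfl | omega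
      · rw [if_neg h1, if_neg (by omega)]
  rw [Finset.sum_congr rfl (fun j _ => this j), sum_ite_nat]
  split_ifs with h1 h2 h3 <;> first | rfl | omega

lemma row (n : ℕ) (s : Fin (n+2) → ℝ)
    (L α : ℝ) (C : Matrix (Fin (n+2)) (Fin (n+2)) ℂ)
    (hC : ∀ i j : Fin (n+2), C i j =
      (if i = j then ((1/s (i-1) + 1/s i : ℝ) : ℂ) else 0)
      + (if (j : ℕ) = (i : ℕ) + 1 then ((-(1/s i) : ℝ) : ℂ) else 0)
      + (if (i : ℕ) = (j : ℕ) + 1 then ((-(1/s j) : ℝ) : ℂ) else 0)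
      + (if (i : ℕ) = 0 ∧ (j : ℕ) = n + 1 then
          -Complex.exp (-(Complex.I*α*L)) / (s j : ℂ) else 0)
      + (if (i : ℕ) = n + 1 ∧ (j : ℕ) = 0 then
          -Complex.exp (Complex.I*α*L) / (s i : ℂ) else 0))
    (x : Fin (n+2) → ℂ) (i : Fin (n+2)) :
    C.mulVec x i =
      ((1/s (i-1) + 1/s i : ℝ) : ℂ) * x i
      + (if h : (i : ℕ) + 1 < n + 2 then ((-(1/s i) : ℝ) : ℂ) * x ⟨(i:ℕ)+1, h⟩ else 0)
      + (if h : 1 ≤ (i : ℕ) then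
          ((-(1/s ⟨(i:ℕ)-1, by omega⟩) : ℝ) : ℂ) * x ⟨(i:ℕ)-1, by omega⟩ else 0)
      + (if (i : ℕ) = 0 then
          -Complex.exp (-(Complex.I*α*L)) / (s (Fin.last (n+1)) : ℂ) * x (Fin.last (n+1)) else 0)
      + (if (i : ℕ) = n + 1 then
          -Complex.exp (Complex.I*α*L) / (s i : ℂ) * x 0 else 0) := by
  have hmv : C.mulVec x i = ∑ j, C i j * x j := rfl
  rw [hmv]
  simp only [hC, add_mul, Finset.sum_add_distrib, ite_mul, zero_mul]
  congr 1
  · congr 1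
    · congr 1
      · congr 1
        · -- diagonal
          rw [Finset.sum_ite_eq]
          simp
        · -- superdiagonal
          exact sum_ite_nat ((i:ℕ)+1) (fun j => ((-(1/s i) : ℝ) : ℂ) * x j)
      · -- subdiagonal
        have hh := sum_ite_nat' (m := n+2) (i:ℕ) (fun j : Fin (n+2) => ((-(1/s j) : ℝ) : ℂ) * x j)
        refine Eq.trans hh ?_
        have hi := i.isLt
        split_ifs with h1 h2 h3 <;> first | rfl | omega
    · -- corner top-right
      have : ∀ j : Fin (n+2), (if (i:ℕ) = 0 ∧ (j:ℕ) = n+1 then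
            -Complex.exp (-(Complex.I*α*L)) / (s j : ℂ) * x j else 0)
          = if (j:ℕ) = n+1 then (if (i:ℕ) = 0 then
              (fun j : Fin (n+2) => -Complex.exp (-(Complex.I*α*L)) / (s j : ℂ) * x j) j else 0) else 0 := by
        intro j
        by_cases h1 : (i:ℕ) = 0 <;> by_cases h2 : (j:ℕ) = n+1 <;> simp [h1, h2]
      rw [Finset.sum_congr rfl (fun j _ => this j), sum_ite_nat]
      rw [dif_pos (by omega : n+1 < n+2)]
      have : (⟨n+1, by omega⟩ : Fin (n+2)) = Fin.last (n+1) := rfl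
      rw [this]
  · -- corner bottom-left
    have : ∀ j : Fin (n+2), (if (i:ℕ) = n+1 ∧ (j:ℕ) = 0 then
          -Complex.exp (Complex.I*α*L) / (s i : ℂ) * x j else 0)
        = if (j:ℕ) = 0 then (if (i:ℕ) = n+1 then
            (fun j : Fin (n+2) => -Complex.exp (Complex.I*α*L) / (s i : ℂ) * x j) j else 0) else 0 := by
      intro j
      by_cases h1 : (i:ℕ) = n+1 <;> by_cases h2 : (j:ℕ) = 0 <;> simp [h1, h2]
    rw [Finset.sum_congr rfl (fun j _ => this j), sum_ite_nat]
    rw [dif_pos (by omega : 0 < n+2)]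
    rfl

lemma key (n : ℕ) (s : Fin (n+2) → ℝ)
    (L α : ℝ) (C : Matrix (Fin (n+2)) (Fin (n+2)) ℂ)
    (hC : ∀ i j : Fin (n+2), C i j =
      (if i = j then ((1/s (i-1) + 1/s i : ℝ) : ℂ) else 0)
      + (if (j : ℕ) = (i : ℕ) + 1 then ((-(1/s i) : ℝ) : ℂ) else 0)
      + (if (i : ℕ) = (j : ℕ) + 1 then ((-(1/s j) : ℝ) : ℂ) else 0)
      + (if (i : ℕ) = 0 ∧ (j : ℕ) = n + 1 then
          -Complex.exp (-(Complex.I*α*L)) / (s j : ℂ) else 0)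
      + (if (i : ℕ) = n + 1 ∧ (j : ℕ) = 0 then
          -Complex.exp (Complex.I*α*L) / (s i : ℂ) else 0))
    (x : Fin (n+2) → ℂ) :
    dotProduct (star x) (C.mulVec x) =
      (((∑ k : Fin (n+1), Complex.normSq (x k.succ - x k.castSucc) / s k.castSucc)
        + Complex.normSq (Complex.exp (Complex.I*α*L) * x 0 - x (Fin.last (n+1)))
            / s (Fin.last (n+1)) : ℝ) : ℂ) := by
  have hdot : dotProduct (star x) (C.mulVec x)
      = ∑ i, (starRingEnd ℂ) (x i) * (C.mulVec x i) := by
    simp [dotProduct, Complex.star_def]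
  rw [hdot, Finset.sum_congr rfl (fun i _ => by rw [row n s L α C hC x i])]
  simp only [mul_add, Finset.sum_add_distrib]
  -- abbreviations
  have hconj : (starRingEnd ℂ) (Complex.exp (Complex.I*α*L))
      = Complex.exp (-(Complex.I*α*L)) := by
    rw [← Complex.exp_conj]; congr 1; simp
  have he' : Complex.exp (Complex.I*α*L) * Complex.exp (-(Complex.I*α*L)) = 1 := by
    rw [← Complex.exp_add]; simp
  -- diagonal sum
  have hA : (∑ i : Fin (n+2), (starRingEnd ℂ) (x i) * (((1/s (i-1) + 1/s i : ℝ) : ℂ) * x i))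
      = (∑ k : Fin (n+1), ((starRingEnd ℂ) (x k.succ) * x k.succ * ((1/(s k.castSucc) : ℝ) : ℂ)
            + (starRingEnd ℂ) (x k.castSucc) * x k.castSucc * ((1/(s k.castSucc) : ℝ) : ℂ)))
        + (starRingEnd ℂ) (x 0) * x 0 * ((1/(s (Fin.last (n+1))) : ℝ) : ℂ)
        + (starRingEnd ℂ) (x (Fin.last (n+1))) * x (Fin.last (n+1))
            * ((1/(s (Fin.last (n+1))) : ℝ) : ℂ) := by
    have split : ∀ i : Fin (n+2), (starRingEnd ℂ) (x i) * (((1/s (i-1) + 1/s i : ℝ) : ℂ) * x i)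
        = (starRingEnd ℂ) (x i) * x i * ((1/(s (i-1)) : ℝ) : ℂ)
          + (starRingEnd ℂ) (x i) * x i * ((1/(s i) : ℝ) : ℂ) := by
      intro i; push_cast; ring
    rw [Finset.sum_congr rfl (fun i _ => split i), Finset.sum_add_distrib]
    have h1 : (∑ i : Fin (n+2), (starRingEnd ℂ) (x i) * x i * ((1/(s (i-1)) : ℝ) : ℂ))
        = ∑ i : Fin (n+2), (starRingEnd ℂ) (x (i+1)) * x (i+1) * ((1/(s i) : ℝ) : ℂ) := by
      refine (Fintype.sum_equiv (Equiv.addRight (1 : Fin (n+2)))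
        (fun i => (starRingEnd ℂ) (x (i+1)) * x (i+1) * ((1/(s i) : ℝ) : ℂ))
        (fun i => (starRingEnd ℂ) (x i) * x i * ((1/(s (i-1)) : ℝ) : ℂ)) ?_).symm
      intro i
      simp only [Equiv.coe_addRight, add_sub_cancel_right]
    rw [h1, Fin.sum_univ_castSucc
        (f := fun i : Fin (n+2) => (starRingEnd ℂ) (x (i+1)) * x (i+1) * ((1/(s i) : ℝ) : ℂ)),
      Fin.sum_univ_castSucc
        (f := fun i : Fin (n+2) => (starRingEnd ℂ) (x i) * x i * ((1/(s i) : ℝ) : ℂ))]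
    simp only [Fin.coeSucc_eq_succ, Fin.last_add_one]
    rw [Finset.sum_add_distrib]
    ring
  -- superdiagonal sum
  have hB : (∑ i : Fin (n+2), (starRingEnd ℂ) (x i) *
        if h : (i : ℕ) + 1 < n + 2 then ((-(1/s i) : ℝ) : ℂ) * x ⟨(i:ℕ)+1, h⟩ else 0)
      = ∑ k : Fin (n+1), (starRingEnd ℂ) (x k.castSucc) * (((-(1/s k.castSucc) : ℝ) : ℂ) * x k.succ) := by
    rw [Fin.sum_univ_castSucc (f := fun i : Fin (n+2) => (starRingEnd ℂ) (x i) *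
        if h : (i : ℕ) + 1 < n + 2 then ((-(1/s i) : ℝ) : ℂ) * x ⟨(i:ℕ)+1, h⟩ else 0)]
    rw [dif_neg (by simp), mul_zero, add_zero]
    refine Finset.sum_congr rfl fun k _ => ?_
    rw [dif_pos (by simp; omega)]
    congr! 2
    all_goals exact Fin.ext (by simp)
  -- subdiagonal sum
  have hCs : (∑ i : Fin (n+2), (starRingEnd ℂ) (x i) *
        if h : 1 ≤ (i : ℕ) then ((-(1/s ⟨(i:ℕ)-1, by omega⟩) : ℝ) : ℂ) * x ⟨(i:ℕ)-1, by omega⟩ else 0)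
      = ∑ k : Fin (n+1), (starRingEnd ℂ) (x k.succ) * (((-(1/s k.castSucc) : ℝ) : ℂ) * x k.castSucc) := by
    rw [Fin.sum_univ_succ]
    rw [dif_neg (by simp), mul_zero, zero_add]
    refine Finset.sum_congr rfl fun k _ => ?_
    rw [dif_pos (by simp)]
    congr! 2
    all_goals exact Fin.ext (by simp)
  -- corner top-right
  have hD : (∑ i : Fin (n+2), (starRingEnd ℂ) (x i) *
        if (i : ℕ) = 0 then
          -Complex.exp (-(Complex.I*α*L)) / (s (Fin.last (n+1)) : ℂ) * x (Fin.last (n+1)) else 0)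
      = (starRingEnd ℂ) (x 0) *
          (-Complex.exp (-(Complex.I*α*L)) / (s (Fin.last (n+1)) : ℂ) * x (Fin.last (n+1))) := by
    simp only [mul_ite, mul_zero]
    refine (sum_ite_nat 0 (fun i => (starRingEnd ℂ) (x i) *
        (-Complex.exp (-(Complex.I*α*L)) / (s (Fin.last (n+1)) : ℂ) * x (Fin.last (n+1))))).trans ?_
    rw [dif_pos (by omega)]
    congr 1
  -- corner bottom-left
  have hE : (∑ i : Fin (n+2), (starRingEnd ℂ) (x i) *
        if (i : ℕ) = n + 1 then -Complex.exp (Complex.I*α*L) / (s i : ℂ) * x 0 else 0)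
      = (starRingEnd ℂ) (x (Fin.last (n+1))) *
          (-Complex.exp (Complex.I*α*L) / (s (Fin.last (n+1)) : ℂ) * x 0) := by
    simp only [mul_ite, mul_zero]
    refine (sum_ite_nat (n+1) (fun i => (starRingEnd ℂ) (x i) *
        (-Complex.exp (Complex.I*α*L) / (s i : ℂ) * x 0))).trans ?_
    rw [dif_pos (by omega)]
    rfl
  rw [hA, hB, hCs, hD, hE]
  -- expand RHS
  have hRHS : (((∑ k : Fin (n+1), Complex.normSq (x k.succ - x k.castSucc) / s k.castSucc)
        + Complex.normSq (Complex.exp (Complex.I*α*L) * x 0 - x (Fin.last (n+1)))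
            / s (Fin.last (n+1)) : ℝ) : ℂ)
      = (∑ k : Fin (n+1), (x k.succ - x k.castSucc)
            * ((starRingEnd ℂ) (x k.succ) - (starRingEnd ℂ) (x k.castSucc))
            * ((1/(s k.castSucc) : ℝ) : ℂ))
        + (Complex.exp (Complex.I*α*L) * x 0 - x (Fin.last (n+1)))
            * (Complex.exp (-(Complex.I*α*L)) * (starRingEnd ℂ) (x 0)
                - (starRingEnd ℂ) (x (Fin.last (n+1))))
            * ((1/(s (Fin.last (n+1))) : ℝ) : ℂ) := by
    rw [Complex.ofReal_add, Complex.ofReal_sum]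
    congr 1
    · refine Finset.sum_congr rfl fun k _ => ?_
      rw [Complex.ofReal_div, ← Complex.mul_conj, map_sub]
      push_cast
      ring
    · rw [Complex.ofReal_div, ← Complex.mul_conj, map_sub, _root_.map_mul, hconj]
      push_cast
      ring
  rw [hRHS]
  -- merge the per-k sums
  have hterm : (∑ k : Fin (n+1), ((starRingEnd ℂ) (x k.succ) * x k.succ * ((1/(s k.castSucc) : ℝ) : ℂ)
          + (starRingEnd ℂ) (x k.castSucc) * x k.castSucc * ((1/(s k.castSucc) : ℝ) : ℂ)))
        + (∑ k : Fin (n+1), (starRingEnd ℂ) (x k.castSucc) * (((-(1/s k.castSucc) : ℝ) : ℂ) * x k.succ))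
        + (∑ k : Fin (n+1), (starRingEnd ℂ) (x k.succ) * (((-(1/s k.castSucc) : ℝ) : ℂ) * x k.castSucc))
      = ∑ k : Fin (n+1), (x k.succ - x k.castSucc)
            * ((starRingEnd ℂ) (x k.succ) - (starRingEnd ℂ) (x k.castSucc))
            * ((1/(s k.castSucc) : ℝ) : ℂ) := by
    rw [← Finset.sum_add_distrib, ← Finset.sum_add_distrib]
    refine Finset.sum_congr rfl fun k _ => ?_
    push_cast
    ring
  push_cast at hterm ⊢
  linear_combination hterm - ((starRingEnd ℂ) (x 0) * x 0 / ((s (Fin.last (n+1)) : ℝ) : ℂ)) * he'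

/-- if `e^{iαL} ≠ 1` the quasiperiodic capacitance matrix (size `N = n+2`) is
positive definite (`x* C^α x = 0 → x = 0`); if `e^{iαL} = 1` its kernel consists exactly of
the constant vectors. -/
theorem stmt15 (n : ℕ) (s : Fin (n+2) → ℝ) (hs : ∀ i, 0 < s i)
    (L α : ℝ) (hL : 0 < L) (C : Matrix (Fin (n+2)) (Fin (n+2)) ℂ)
    (hC : ∀ i j : Fin (n+2), C i j =
      (if i = j then ((1/s (i-1) + 1/s i : ℝ) : ℂ) else 0)
      + (if (j : ℕ) = (i : ℕ) + 1 then ((-(1/s i) : ℝ) : ℂ) else 0)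
      + (if (i : ℕ) = (j : ℕ) + 1 then ((-(1/s j) : ℝ) : ℂ) else 0)
      + (if (i : ℕ) = 0 ∧ (j : ℕ) = n + 1 then
          -Complex.exp (-(Complex.I*α*L)) / (s j : ℂ) else 0)
      + (if (i : ℕ) = n + 1 ∧ (j : ℕ) = 0 then
          -Complex.exp (Complex.I*α*L) / (s i : ℂ) else 0)) :
    (Complex.exp (Complex.I*α*L) ≠ 1 →
      ∀ x : Fin (n+2) → ℂ, dotProduct (star x) (C.mulVec x) = 0 → x = 0) ∧
    (Complex.exp (Complex.I*α*L) = 1 →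
      ∀ x : Fin (n+2) → ℂ, (C.mulVec x = 0 ↔ ∃ c : ℂ, x = fun _ => c)) := by
  have zero_of_form : ∀ x : Fin (n+2) → ℂ, dotProduct (star x) (C.mulVec x) = 0 →
      (∀ k : Fin (n+1), x k.succ = x k.castSucc) ∧
        Complex.exp (Complex.I*α*L) * x 0 = x (Fin.last (n+1)) := by
    intro x hx
    rw [key n s L α C hC x, Complex.ofReal_eq_zero] at hx
    have hnn : ∀ k : Fin (n+1),
        0 ≤ Complex.normSq (x k.succ - x k.castSucc) / s k.castSucc :=
      fun k => div_nonneg (Complex.normSq_nonneg _) (hs _).le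
    have hsum_nn : 0 ≤ ∑ k : Fin (n+1),
        Complex.normSq (x k.succ - x k.castSucc) / s k.castSucc :=
      Finset.sum_nonneg fun k _ => hnn k
    have hlast_nn : 0 ≤ Complex.normSq (Complex.exp (Complex.I*α*L) * x 0
        - x (Fin.last (n+1))) / s (Fin.last (n+1)) :=
      div_nonneg (Complex.normSq_nonneg _) (hs _).le
    have hsum0 : ∑ k : Fin (n+1),
        Complex.normSq (x k.succ - x k.castSucc) / s k.castSucc = 0 := by linarith
    have hlast0 : Complex.normSq (Complex.exp (Complex.I*α*L) * x 0
        - x (Fin.last (n+1))) / s (Fin.last (n+1)) = 0 := by linarith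
    constructor
    · intro k
      have hk := (Finset.sum_eq_zero_iff_of_nonneg (fun k _ => hnn k)).mp hsum0 k
        (Finset.mem_univ k)
      have : Complex.normSq (x k.succ - x k.castSucc) = 0 := by
        rcases div_eq_zero_iff.mp hk with h | h
        · exact h
        · exact absurd h (ne_of_gt (hs _))
      have := Complex.normSq_eq_zero.mp this
      linear_combination this
    · have : Complex.normSq (Complex.exp (Complex.I*α*L) * x 0
          - x (Fin.last (n+1))) = 0 := by
        rcases div_eq_zero_iff.mp hlast0 with h | h
        · exact h
        · exact absurd h (ne_of_gt (hs _))
      have := Complex.normSq_eq_zero.mp this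
      linear_combination this
  have const_of : ∀ x : Fin (n+2) → ℂ, (∀ k : Fin (n+1), x k.succ = x k.castSucc) →
      ∀ i : Fin (n+2), x i = x 0 := by
    intro x h i
    induction i using Fin.induction with
    | zero => rfl
    | succ k ih => rw [h k]; exact ih
  constructor
  · intro hne x hx
    obtain ⟨h1, h2⟩ := zero_of_form x hx
    have hconst := const_of x h1
    rw [hconst (Fin.last (n+1))] at h2
    have hfac : (Complex.exp (Complex.I*α*L) - 1) * x 0 = 0 := by linear_combination h2
    have hx0 : x 0 = 0 := by
      rcases mul_eq_zero.mp hfac with h | h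
      · exact absurd (by linear_combination h) hne
      · exact h
    funext i
    rw [Pi.zero_apply, hconst i, hx0]
  · intro he x
    have hen : Complex.exp (-(Complex.I*α*L)) = 1 := by
      have : (starRingEnd ℂ) (Complex.exp (Complex.I*α*L))
          = Complex.exp (-(Complex.I*α*L)) := by
        rw [← Complex.exp_conj]; congr 1; simp
      rw [← this, he, _root_.map_one]
    constructor
    · intro hmv
      have hform : dotProduct (star x) (C.mulVec x) = 0 := by
        rw [hmv, dotProduct_zero]
      obtain ⟨h1, _⟩ := zero_of_form x hform
      exact ⟨x 0, funext fun i => const_of x h1 i⟩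
    · rintro ⟨c, rfl⟩
      funext i
      rw [Pi.zero_apply, row n s L α C hC _ i]
      by_cases hi0 : (i : ℕ) = 0
      · have hieq : i = 0 := Fin.ext (by simpa using hi0)
        subst hieq
        rw [dif_pos (by omega), dif_neg (by simp), if_pos hi0, if_neg (by simp),
          hen]
        have hsub : (0 - 1 : Fin (n+2)) = Fin.last (n+1) := by
          apply Fin.ext
          rw [Fin.coe_sub_one]
          simp
        rw [hsub]
        push_cast
        ring
      · by_cases hil : (i : ℕ) = n + 1
        · have hieq : i = Fin.last (n+1) := Fin.ext (by simpa using hil)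
          subst hieq
          rw [dif_neg (by simp), dif_pos (by simp), if_neg (by simp), if_pos (by simp),
            he]
          have hsub : (Fin.last (n+1) - 1 : Fin (n+2)) = ⟨(Fin.last (n+1) : ℕ) - 1, by omega⟩ := by
            apply Fin.ext
            rw [Fin.coe_sub_one]
            simp
          rw [hsub]
          push_cast
          ring
        · have hi1 : 1 ≤ (i : ℕ) := by omega
          have hilt : (i : ℕ) + 1 < n + 2 := by have := i.isLt; omega
          rw [dif_pos hilt, dif_pos hi1, if_neg hi0, if_neg hil]
          have hsub : (i - 1 : Fin (n+2)) = ⟨(i : ℕ) - 1, by omega⟩ := by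
            apply Fin.ext
            rw [Fin.coe_sub_one]
            rw [if_neg (fun h => hi0 (by simpa using congrArg Fin.val h))]
          rw [hsub]
          push_cast
          ring
end
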